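/- arXiv:2210.00570 — 4 statements merged into one kernel-verified Lean document; each statement's English description precedes it below -/
import Mathlib

section
/- Let L', M', N', P', s, t be real numbers with L' > 0, M' > 0, P' > 0 and N' > P', and define γ₁(x) = (L' + M'·cos(s + x)) / (N' + P'·cos(t + x)). If the derivative of γ₁ at a real point x equals zero, then sin(t + x)/(M'·N') − sin(s + x)/(L'·P') = sin(s − t)/(L'·N'); equivalently, L'·P'·sin(t + x) − M'·N'·sin(s + x) = M'·P'·sin(s − t). -/
open Real

lemma hasDerivAt_const_add_mul_cos_add (a b c x : ℝ) :
    HasDerivAt (fun y => a + b * cos (c + y)) (-(b * sin (c + x))) x := by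
  simpa using (((hasDerivAt_cos (c + x)).comp x
    ((hasDerivAt_id x).const_add c)).const_mul b).const_add a

lemma const_add_mul_cos_pos {N P : ℝ} (h : |P| < N) (θ : ℝ) : 0 < N + P * cos θ := by
  have : |P * cos θ| ≤ |P| := by
    rw [abs_mul]
    exact mul_le_of_le_one_right (abs_nonneg P) (abs_cos_le_one θ)
  linarith [neg_abs_le (P * cos θ)]

lemma deriv_mul_eq_mul_deriv_of_deriv_div_eq_zero {u v : ℝ → ℝ} {u' v' x : ℝ}
    (hu : HasDerivAt u u' x) (hv : HasDerivAt v v' x) (hvx : v x ≠ 0)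
    (hcrit : deriv (fun y => u y / v y) x = 0) : u' * v x = u x * v' := by
  rw [(hu.fun_div hv hvx).deriv, div_eq_zero_iff] at hcrit
  exact sub_eq_zero.mp (hcrit.resolve_right (pow_ne_zero 2 hvx))

lemma mul_sin_sub_mul_sin_eq_of_critical {L M N P s t x : ℝ}
    (h : -(M * sin (s + x)) * (N + P * cos (t + x)) =
      (L + M * cos (s + x)) * -(P * sin (t + x))) :
    L * P * sin (t + x) - M * N * sin (s + x) = M * P * sin (s - t) := by
  have hsub : sin (s - t) = sin (s + x) * cos (t + x) - cos (s + x) * sin (t + x) := by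
    rw [← sin_sub]; ring_nf
  rw [hsub]
  linear_combination h

lemma div_sub_div_eq_div_of_mul_sub_mul_eq {L M N P a b c : ℝ}
    (hL : L ≠ 0) (hM : M ≠ 0) (hN : N ≠ 0) (hP : P ≠ 0)
    (h : L * P * a - M * N * b = M * P * c) :
    a / (M * N) - b / (L * P) = c / (L * N) := by
  field_simp
  linear_combination h

/-- For `L' > 0, M' > 0, P' > 0, N' > P'` and
`γ₁(x) = (L' + M'·cos(s + x)) / (N' + P'·cos(t + x))`, if `deriv γ₁ x = 0` then
`sin(t + x)/(M'·N') − sin(s + x)/(L'·P') = sin(s − t)/(L'·N')`; equivalently,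
`L'·P'·sin(t + x) − M'·N'·sin(s + x) = M'·P'·sin(s − t)`. -/
theorem stmt_2 (L' M' N' P' s t : ℝ) (hL : L' > 0) (hM : M' > 0) (hP : P' > 0)
    (hNP : N' > P')
    (γ₁ : ℝ → ℝ)
    (hγ : γ₁ = fun x => (L' + M' * Real.cos (s + x)) / (N' + P' * Real.cos (t + x)))
    (x : ℝ) (hx : deriv γ₁ x = 0) :
    Real.sin (t + x) / (M' * N') - Real.sin (s + x) / (L' * P') =
        Real.sin (s - t) / (L' * N') ∧
      L' * P' * Real.sin (t + x) - M' * N' * Real.sin (s + x) =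
        M' * P' * Real.sin (s - t) := by
  subst hγ
  have hden : 0 < N' + P' * cos (t + x) :=
    const_add_mul_cos_pos (by rwa [abs_of_pos hP]) (t + x)
  have key := mul_sin_sub_mul_sin_eq_of_critical
    (deriv_mul_eq_mul_deriv_of_deriv_div_eq_zero (u := fun y => L' + M' * cos (s + y))
      (v := fun y => N' + P' * cos (t + y)) (hasDerivAt_const_add_mul_cos_add L' M' s x)
      (hasDerivAt_const_add_mul_cos_add N' P' t x) hden.ne' hx)
  exact ⟨div_sub_div_eq_div_of_mul_sub_mul_eq hL.ne' hM.ne' (hP.trans hNP).ne' hP.ne' key, key⟩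
end

section
/- Let L', M', N', P', s, t be real numbers with L' > 0, M' > 0, P' > 0, N' > P', and define γ₁(x) = (L' + M'·cos(s + x)) / (N' + P'·cos(t + x)). If the derivative of γ₁ at a real point x equals zero, then sin(t + x) satisfies the quadratic relation ((L'·P' − M'·N'·cos(s − t))·sin(t + x) − M'·P'·sin(s − t))² = (M'·N')²·sin²(s − t)·cos²(t + x). -/
/-- For `L' > 0, M' > 0, P' > 0, N' > P'` and
`γ₁(x) = (L' + M'·cos(s + x)) / (N' + P'·cos(t + x))`, if `deriv γ₁ x = 0` then
`((L'·P' − M'·N'·cos(s − t))·sin(t + x) − M'·P'·sin(s − t))²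
  = (M'·N')²·sin²(s − t)·cos²(t + x)`. -/
theorem stmt_4 (L' M' N' P' s t : ℝ) (hL : L' > 0) (hM : M' > 0) (hP : P' > 0)
    (hNP : N' > P')
    (γ₁ : ℝ → ℝ)
    (hγ : γ₁ = fun x => (L' + M' * Real.cos (s + x)) / (N' + P' * Real.cos (t + x)))
    (x : ℝ) (hx : deriv γ₁ x = 0) :
    ((L' * P' - M' * N' * Real.cos (s - t)) * Real.sin (t + x) -
        M' * P' * Real.sin (s - t)) ^ 2 =
      (M' * N') ^ 2 * Real.sin (s - t) ^ 2 * Real.cos (t + x) ^ 2 := by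
  have hden : N' + P' * Real.cos (t + x) > 0 := by
    nlinarith [Real.neg_one_le_cos (t + x), Real.cos_le_one (t + x)]
  have hnum : HasDerivAt (fun y => L' + M' * Real.cos (s + y))
      (M' * (-Real.sin (s + x))) x := by
    have h1 : HasDerivAt (fun y => s + y) 1 x := by
      simpa using (hasDerivAt_id x).const_add s
    have h2 : HasDerivAt (fun y => Real.cos (s + y)) (-Real.sin (s + x) * 1) x :=
      (Real.hasDerivAt_cos (s + x)).comp x h1
    simpa [mul_comm, mul_assoc] using ((h2.const_mul M').const_add L')
  have hden' : HasDerivAt (fun y => N' + P' * Real.cos (t + y))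
      (P' * (-Real.sin (t + x))) x := by
    have h1 : HasDerivAt (fun y => t + y) 1 x := by
      simpa using (hasDerivAt_id x).const_add t
    have h2 : HasDerivAt (fun y => Real.cos (t + y)) (-Real.sin (t + x) * 1) x :=
      (Real.hasDerivAt_cos (t + x)).comp x h1
    simpa [mul_comm, mul_assoc] using ((h2.const_mul P').const_add N')
  have hd : HasDerivAt γ₁
      ((M' * (-Real.sin (s + x)) * (N' + P' * Real.cos (t + x)) -
        (L' + M' * Real.cos (s + x)) * (P' * (-Real.sin (t + x)))) /
        (N' + P' * Real.cos (t + x)) ^ 2) x := by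
    rw [hγ]
    exact hnum.div hden' (ne_of_gt hden)
  have h0 : (M' * (-Real.sin (s + x)) * (N' + P' * Real.cos (t + x)) -
        (L' + M' * Real.cos (s + x)) * (P' * (-Real.sin (t + x)))) /
        (N' + P' * Real.cos (t + x)) ^ 2 = 0 := by
    rw [← hd.deriv]; exact hx
  have hsq : (N' + P' * Real.cos (t + x)) ^ 2 ≠ 0 := pow_ne_zero _ (ne_of_gt hden)
  have h1 : M' * (-Real.sin (s + x)) * (N' + P' * Real.cos (t + x)) -
      (L' + M' * Real.cos (s + x)) * (P' * (-Real.sin (t + x))) = 0 :=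
    (div_eq_zero_iff.mp h0).resolve_right hsq
  have hs : s + x = (s - t) + (t + x) := by ring
  rw [hs, Real.sin_add (s - t) (t + x), Real.cos_add (s - t) (t + x)] at h1
  have hpy := Real.sin_sq_add_cos_sq (t + x)
  have key : (L' * P' - M' * N' * Real.cos (s - t)) * Real.sin (t + x) -
      M' * P' * Real.sin (s - t) = M' * N' * Real.sin (s - t) * Real.cos (t + x) := by
    linear_combination h1 + M' * P' * Real.sin (s - t) * hpy
  rw [key]; ring
end

section
/- Let s, t, c, k be real numbers with c > 0, k > 0, and sin(s − t) ≠ 0. Set L' = 2, M' = 2, N' = k² + 1 + c, P' = 2k, and let C' = (L'·P')² + (M'·N')² − 2·L'·M'·N'·P'·cos(s − t). Let v₊ and v₋ denote the larger and smaller of the two stationary values L'/N' − (1/N')·C'/(P'·(L'·P' − M'·N'·cos(s − t)) ± N'·√(C' − (M'·P'·sin(s − t))²)), and let γ₂ = 4/(k² + 2k·cos(s − t) + 1 + c) be the SINR of the signal-alignment solution x = −s. Then v₊ − γ₂ = 16·k²·sin²(s − t) / ((k² + 2k·cos(s − t) + 1 + c)·((k + 1)² + c)·((k − 1)² + c)) and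 γ₂ − v₋ = 4/(k² + 2k·cos(s − t) + 1 + c). -/
/-!
For `L' = M' = a > 0` and `|P'| < N'` the square root in Theorem 1 is exact (θ = s − t):
`C' − (a·P'·sin θ)² = (a·(N' − P'·cos θ))²`. With it the `ε = +1` denominator collapses to
`C'/a`, so that stationary value is `0` (the SINR vanishes where `cos(s + x) = −1`), while the
`ε = −1` value is `2a·(N' − P'·cos θ)/(N'² − P'²)`. Comparing the latter with the
signal-alignment value `2a/(N' + P'·cos θ)` leaves `2a·P'²·(1 − cos² θ)` in the numerator.
-/

open Real

namespace OneElementRIS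

/-- The quantity `C'` of Theorem 1. -/
noncomputable def stationaryC (L M N P θ : ℝ) : ℝ :=
  (L * P) ^ 2 + (M * N) ^ 2 - 2 * L * M * N * P * cos θ

/-- The stationary values of Theorem 1, with sign `ε = ±1` in front of the square root. -/
noncomputable def stationaryValue (L M N P θ ε : ℝ) : ℝ :=
  L / N - (1 / N) * stationaryC L M N P θ /
    (P * (L * P - M * N * cos θ) +
      ε * N * sqrt (stationaryC L M N P θ - (M * P * sin θ) ^ 2))

variable {a N P : ℝ} (θ : ℝ)

lemma mul_cos_lt_of_abs_lt (hPN : |P| < N) : P * cos θ < N :=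
  calc P * cos θ ≤ |P * cos θ| := le_abs_self _
    _ = |P| * |cos θ| := abs_mul _ _
    _ ≤ |P| := mul_le_of_le_one_right (abs_nonneg _) (abs_cos_le_one θ)
    _ < N := hPN

lemma sqrt_stationaryC_sub (ha : 0 < a) (hPN : |P| < N) :
    sqrt (stationaryC a a N P θ - (a * P * sin θ) ^ 2) = a * (N - P * cos θ) := by
  have hpos : 0 ≤ a * (N - P * cos θ) :=
    mul_nonneg ha.le (sub_nonneg.mpr (mul_cos_lt_of_abs_lt θ hPN).le)
  rw [← sqrt_sq hpos, stationaryC]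
  congr 1
  linear_combination -(a * P) ^ 2 * sin_sq_add_cos_sq θ

lemma stationaryValue_one (ha : 0 < a) (hPN : |P| < N) :
    stationaryValue a a N P θ 1 = 0 := by
  have hgap : 0 < N - P * cos θ := sub_pos.mpr (mul_cos_lt_of_abs_lt θ hPN)
  have hN : 0 < N := (abs_nonneg P).trans_lt hPN
  have hden : P * (a * P - a * N * cos θ) + 1 * N * (a * (N - P * cos θ)) =
      a * ((N - P * cos θ) ^ 2 + (P * sin θ) ^ 2) := by
    rw [mul_pow, sin_sq]; ring
  have hden_pos : 0 < a * ((N - P * cos θ) ^ 2 + (P * sin θ) ^ 2) := by positivity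
  rw [stationaryValue, sqrt_stationaryC_sub θ ha hPN, hden, stationaryC]
  field_simp
  rw [sin_sq]
  ring

lemma stationaryValue_neg_one (ha : 0 < a) (hPN : |P| < N) :
    stationaryValue a a N P θ (-1) = 2 * a * (N - P * cos θ) / ((N + P) * (N - P)) := by
  obtain ⟨hNP, hPN'⟩ := abs_lt.mp hPN
  have hplus : 0 < N + P := by linarith
  have hminus : 0 < N - P := by linarith
  have hN : 0 < N := by linarith
  have hden : P * (a * P - a * N * cos θ) + -1 * N * (a * (N - P * cos θ)) =
      -(a * ((N + P) * (N - P))) := by ring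
  rw [stationaryValue, sqrt_stationaryC_sub θ ha hPN, hden, stationaryC]
  field_simp
  ring

lemma stationaryValue_neg_one_pos (ha : 0 < a) (hPN : |P| < N) :
    0 < stationaryValue a a N P θ (-1) := by
  obtain ⟨hNP, hPN'⟩ := abs_lt.mp hPN
  have hgap : 0 < N - P * cos θ := sub_pos.mpr (mul_cos_lt_of_abs_lt θ hPN)
  rw [stationaryValue_neg_one θ ha hPN]
  exact div_pos (by positivity) (mul_pos (by linarith) (by linarith))

lemma stationaryValue_neg_one_sub_alignment (ha : 0 < a) (hPN : |P| < N) :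
    stationaryValue a a N P θ (-1) - 2 * a / (N + P * cos θ) =
      2 * a * P ^ 2 * sin θ ^ 2 / ((N + P * cos θ) * (N + P) * (N - P)) := by
  obtain ⟨hNP, hPN'⟩ := abs_lt.mp hPN
  have hplus : 0 < N + P := by linarith
  have hminus : 0 < N - P := by linarith
  have hgap : 0 < N + P * cos θ := by
    have := mul_cos_lt_of_abs_lt (P := -P) θ (by rwa [abs_neg]); linarith
  rw [stationaryValue_neg_one θ ha hPN, sin_sq]
  field_simp
  ring

end OneElementRIS

theorem stmt_8_general (s t c k : ℝ) (hc : 0 < c)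
    (L' M' N' P' : ℝ) (hL : L' = 2) (hM : M' = 2) (hN : N' = k ^ 2 + 1 + c)
    (hP : P' = 2 * k)
    (C' : ℝ)
    (hC : C' = (L' * P') ^ 2 + (M' * N') ^ 2 -
      2 * L' * M' * N' * P' * Real.cos (s - t))
    (f : ℝ → ℝ)
    (hf : f = fun ε => L' / N' -
      (1 / N') * C' /
        (P' * (L' * P' - M' * N' * Real.cos (s - t)) +
          ε * N' * Real.sqrt (C' - (M' * P' * Real.sin (s - t)) ^ 2)))
    (vplus vminus γ₂ : ℝ)
    (hvp : vplus = max (f 1) (f (-1))) (hvm : vminus = min (f 1) (f (-1)))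
    (hγ₂ : γ₂ = 4 / (k ^ 2 + 2 * k * Real.cos (s - t) + 1 + c)) :
    vplus - γ₂ =
        16 * k ^ 2 * Real.sin (s - t) ^ 2 /
          ((k ^ 2 + 2 * k * Real.cos (s - t) + 1 + c) * ((k + 1) ^ 2 + c) *
            ((k - 1) ^ 2 + c)) ∧
      γ₂ - vminus = 4 / (k ^ 2 + 2 * k * Real.cos (s - t) + 1 + c) := by
  have hf' : f = OneElementRIS.stationaryValue 2 2 (k ^ 2 + 1 + c) (2 * k) (s - t) := by
    subst hf hC hL hM hN hP; rfl
  have hPN : |2 * k| < k ^ 2 + 1 + c :=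
    abs_lt.mpr ⟨by nlinarith [sq_nonneg (k + 1)], by nlinarith [sq_nonneg (k - 1)]⟩
  have hγ₂' : γ₂ = 2 * 2 / (k ^ 2 + 1 + c + 2 * k * cos (s - t)) := by
    rw [hγ₂]; ring_nf
  have hle : f 1 ≤ f (-1) := by
    rw [hf', OneElementRIS.stationaryValue_one _ two_pos hPN]
    exact (OneElementRIS.stationaryValue_neg_one_pos _ two_pos hPN).le
  rw [hvp, hvm, max_eq_right hle, min_eq_left hle, hf', OneElementRIS.stationaryValue_one _ two_pos hPN,
    sub_zero, hγ₂', OneElementRIS.stationaryValue_neg_one_sub_alignment _ two_pos hPN]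
  constructor <;> ring_nf

/-- Corollary 1 of the paper: with `L' = 2`, `M' = 2`, `N' = k² + 1 + c`, `P' = 2k`
(`c > 0`, `k > 0`, `sin(s − t) ≠ 0`) and
`C' = (L'·P')² + (M'·N')² − 2·L'·M'·N'·P'·cos(s − t)`, letting `v₊` and `v₋` be the
larger and smaller of the two stationary values
`L'/N' − (1/N')·C'/(P'·(L'·P' − M'·N'·cos(s − t)) ± N'·√(C' − (M'·P'·sin(s − t))²))`
and `γ₂ = 4/(k² + 2k·cos(s − t) + 1 + c)` the SINR of the signal-alignment solution,
one has
`v₊ − γ₂ = 16k²·sin²(s − t)/((k² + 2k·cos(s − t) + 1 + c)·((k + 1)² + c)·((k − 1)² + c))`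
and `γ₂ − v₋ = 4/(k² + 2k·cos(s − t) + 1 + c)`. -/
theorem stmt_8 (s t c k : ℝ) (hc : 0 < c) (hk : 0 < k)
    (hst : Real.sin (s - t) ≠ 0)
    (L' M' N' P' : ℝ) (hL : L' = 2) (hM : M' = 2) (hN : N' = k ^ 2 + 1 + c)
    (hP : P' = 2 * k)
    (C' : ℝ)
    (hC : C' = (L' * P') ^ 2 + (M' * N') ^ 2 -
      2 * L' * M' * N' * P' * Real.cos (s - t))
    (f : ℝ → ℝ)
    (hf : f = fun ε => L' / N' -
      (1 / N') * C' /
        (P' * (L' * P' - M' * N' * Real.cos (s - t)) +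
          ε * N' * Real.sqrt (C' - (M' * P' * Real.sin (s - t)) ^ 2)))
    (vplus vminus γ₂ : ℝ)
    (hvp : vplus = max (f 1) (f (-1))) (hvm : vminus = min (f 1) (f (-1)))
    (hγ₂ : γ₂ = 4 / (k ^ 2 + 2 * k * Real.cos (s - t) + 1 + c)) :
    vplus - γ₂ =
        16 * k ^ 2 * Real.sin (s - t) ^ 2 /
          ((k ^ 2 + 2 * k * Real.cos (s - t) + 1 + c) * ((k + 1) ^ 2 + c) *
            ((k - 1) ^ 2 + c)) ∧
      γ₂ - vminus = 4 / (k ^ 2 + 2 * k * Real.cos (s - t) + 1 + c) :=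
  stmt_8_general s t c k hc L' M' N' P' hL hM hN hP C' hC f hf vplus vminus γ₂ hvp hvm hγ₂
end

section
/- Let (Ω, 𝔽, ℙ) be a probability space and let n₁, n₂ : Ω → ℂ be independent, integrable-square complex random variables with E[n₁] = 0, E[n₂] = 0, E[|n₁|²] = P·(1 − τ_γ) and E[|n₂|²] = |α|²·P·(1 − τ_α), where P > 0, τ_α, τ_γ ∈ [0, 1], α ∈ ℂ and θ ∈ ℝ. Then E[|√τ_α · α·e^{iθ} · n₁ + n₂|²] = P·|α|²·(1 − τ_α·τ_γ). -/
/-!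
The noise `√τ_α α e^{iθ} n₁` is independent of the centred noise `n₂`, so the cross term of
`‖X + Y‖² = ‖X‖² + 2⟪X, Y⟫ + ‖Y‖²` has expectation `⟪E X, E Y⟫ = 0` and the second moments add.
With `|√τ_α α e^{iθ}|² = τ_α |α|²` this gives
`τ_α |α|² P (1 - τ_γ) + |α|² P (1 - τ_α) = P |α|² (1 - τ_α τ_γ)`.
-/

open MeasureTheory ProbabilityTheory
open scoped RealInnerProductSpace

namespace ProbabilityTheory

variable {Ω E : Type*} {mΩ : MeasurableSpace Ω} {μ : Measure Ω}
  [NormedAddCommGroup E] [InnerProductSpace ℝ E] [CompleteSpace E]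
  [MeasurableSpace E] [BorelSpace E]

lemma IndepFun.integral_inner_eq_zero {X Y : Ω → E} (hXY : X ⟂ᵢ[μ] Y)
    (hX : Integrable X μ) (hY : Integrable Y μ) (hY₀ : μ[Y] = 0) :
    ∫ ω, ⟪X ω, Y ω⟫ ∂μ = 0 :=
  (hXY.integral_bilin hX hY (innerSL ℝ)).trans (by simp [hY₀])

lemma IndepFun.integral_norm_add_sq [IsFiniteMeasure μ] {X Y : Ω → E} (hXY : X ⟂ᵢ[μ] Y)
    (hX : MemLp X 2 μ) (hY : MemLp Y 2 μ) (hY₀ : μ[Y] = 0) :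
    ∫ ω, ‖X ω + Y ω‖ ^ 2 ∂μ = ∫ ω, ‖X ω‖ ^ 2 ∂μ + ∫ ω, ‖Y ω‖ ^ 2 ∂μ := by
  have hX₁ := hX.integrable one_le_two
  have hY₁ := hY.integrable one_le_two
  have hinner : Integrable (fun ω ↦ ⟪X ω, Y ω⟫) μ := hXY.integrable_bilin hX₁ hY₁ (innerSL ℝ)
  have hXsq := hX.integrable_norm_pow two_ne_zero
  have hXsq_add : Integrable (fun ω ↦ ‖X ω‖ ^ 2 + 2 * ⟪X ω, Y ω⟫) μ :=
    hXsq.add (hinner.const_mul 2)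
  simp_rw [norm_add_sq_real]
  rw [integral_add hXsq_add (hY.integrable_norm_pow two_ne_zero),
    integral_add hXsq (hinner.const_mul 2), integral_const_mul,
    hXY.integral_inner_eq_zero hX₁ hY₁ hY₀, mul_zero, add_zero]

end ProbabilityTheory

theorem stmt_10_general {Ω : Type*} [MeasureSpace Ω]
    [IsProbabilityMeasure (ℙ : Measure Ω)]
    (n₁ n₂ : Ω → ℂ) (hindep : IndepFun n₁ n₂)
    (hn₁ : MemLp n₁ 2) (hn₂ : MemLp n₂ 2)
    (P τα τγ : ℝ) (hτα : τα ∈ Set.Icc (0 : ℝ) 1)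
    (α : ℂ) (θ : ℝ)
    (hmean₂ : ∫ ω, n₂ ω = 0)
    (hvar₁ : ∫ ω, ‖n₁ ω‖ ^ 2 = P * (1 - τγ))
    (hvar₂ : ∫ ω, ‖n₂ ω‖ ^ 2 = ‖α‖ ^ 2 * P * (1 - τα)) :
    ∫ ω, ‖(Real.sqrt τα : ℂ) * (α * Complex.exp (θ * Complex.I)) * n₁ ω
        + n₂ ω‖ ^ 2 =
      P * ‖α‖ ^ 2 * (1 - τα * τγ) := by
  set c : ℂ := (Real.sqrt τα : ℂ) * (α * Complex.exp (θ * Complex.I))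
  have hc : ‖c‖ ^ 2 = τα * ‖α‖ ^ 2 := by
    simp [c, Complex.norm_exp_ofReal_mul_I, mul_pow, Real.sq_sqrt hτα.1]
  have hindep_scaled : IndepFun (fun ω ↦ c * n₁ ω) n₂ :=
    hindep.comp (measurable_const_mul c) measurable_id
  rw [hindep_scaled.integral_norm_add_sq (hn₁.const_mul c) hn₂ hmean₂, hvar₂]
  simp_rw [norm_mul c, mul_pow]
  rw [integral_const_mul, hvar₁, hc]
  ring

/-- Lemma 1 core computation: if `n₁, n₂` are independent zero-mean square-integrable
complex noises with `E[|n₁|²] = P(1 − τ_γ)` and `E[|n₂|²] = |α|²P(1 − τ_α)`, then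
`E[|√τ_α·α·e^{iθ}·n₁ + n₂|²] = P·|α|²·(1 − τ_α·τ_γ)`. -/
theorem stmt_10 {Ω : Type*} [MeasureSpace Ω]
    [IsProbabilityMeasure (ℙ : Measure Ω)]
    (n₁ n₂ : Ω → ℂ) (hindep : IndepFun n₁ n₂)
    (hn₁ : MemLp n₁ 2) (hn₂ : MemLp n₂ 2)
    (P τα τγ : ℝ) (hP : 0 < P) (hτα : τα ∈ Set.Icc (0 : ℝ) 1)
    (hτγ : τγ ∈ Set.Icc (0 : ℝ) 1) (α : ℂ) (θ : ℝ)
    (hmean₁ : ∫ ω, n₁ ω = 0) (hmean₂ : ∫ ω, n₂ ω = 0)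
    (hvar₁ : ∫ ω, ‖n₁ ω‖ ^ 2 = P * (1 - τγ))
    (hvar₂ : ∫ ω, ‖n₂ ω‖ ^ 2 = ‖α‖ ^ 2 * P * (1 - τα)) :
    ∫ ω, ‖(Real.sqrt τα : ℂ) * (α * Complex.exp (θ * Complex.I)) * n₁ ω
        + n₂ ω‖ ^ 2 =
      P * ‖α‖ ^ 2 * (1 - τα * τγ) :=
  stmt_10_general n₁ n₂ hindep hn₁ hn₂ P τα τγ hτα α θ hmean₂ hvar₁ hvar₂
end
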